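/- Let M = (S, ρ) be a matroid scheme and a an atom of S. The following are equivalent: (1) for every x ∈ S with x ≱ a, the set x∨a is nonempty and ρ(u) = ρ(x)+1 for every u ∈ x∨a; (2) a ≤ b for every basis b ∈ B(M); (3) a ≤ m for every maximal element m of S, and a ≰ c for every circuit c ∈ C(M). -/

import Mathlib

/-- The set of minimal upper bounds of `x` and `y` (denoted `x ∨ y` in the paper). -/
def mub {S : Type*} [PartialOrder S] (x y : S) : Set S :=
  {u | x ≤ u ∧ y ≤ u ∧ ∀ v, x ≤ v → y ≤ v → v ≤ u → v = u}

/-- The set of maximal lower bounds of `x` and `y` (denoted `x ∧ y` in the paper). -/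
def mlb {S : Type*} [PartialOrder S] (x y : S) : Set S :=
  {l | l ≤ x ∧ l ≤ y ∧ ∀ m, m ≤ x → m ≤ y → l ≤ m → m = l}

/-- The set of minimal upper bounds of a subset `T`. -/
def mubSet {S : Type*} [PartialOrder S] (T : Set S) : Set S :=
  {u | (∀ t ∈ T, t ≤ u) ∧ ∀ v, (∀ t ∈ T, t ≤ v) → v ≤ u → v = u}

/-- The number of atoms below `x`, i.e. `|x|`, the rank of `x` in a simplicial poset. -/
noncomputable def natRank {S : Type*} [PartialOrder S] [OrderBot S] (x : S) : ℕ :=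
  Nat.card {a : S // IsAtom a ∧ a ≤ x}

/-- A finite bounded-below poset is simplicial if every lower interval is isomorphic to
the Boolean lattice of subsets of the set of atoms below. -/
def IsSimplicialPoset (S : Type*) [PartialOrder S] [OrderBot S] [Fintype S] : Prop :=
  ∀ x : S, Nonempty (Set.Iic x ≃o Set {a : S // IsAtom a ∧ a ≤ x})

/-- A matroid scheme: a rank function `ρ` on a finite simplicial poset `S`
satisfying (M1)–(M5). -/
structure IsMatroidScheme {S : Type*} [PartialOrder S] [OrderBot S] [Fintype S]
    (ρ : S → ℕ) : Prop where
  simplicial : IsSimplicialPoset S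
  M1 : ∀ x : S, ρ x ≤ natRank x
  M2 : ∀ ⦃x y : S⦄, x ≤ y → ρ x ≤ ρ y
  M3 : ∀ x y u l : S, u ∈ mub x y → l ∈ mlb x y → ρ u + ρ l ≤ ρ x + ρ y
  M4 : ∀ x y l : S, l ∈ mlb x y → ρ x = ρ l → (mub x y).Nonempty
  M5 : ∀ x y : S, ρ x < ρ y →
    ∃ a : S, IsAtom a ∧ a ≤ y ∧ ¬ a ≤ x ∧ (mub x a).Nonempty

/-- `cl` is the closure operator of a matroid scheme `(S, ρ)`:
`cl x` is the greatest element above `x` of the same rank. -/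
def IsClosureFun {S : Type*} [PartialOrder S] (ρ : S → ℕ) (cl : S → S) : Prop :=
  ∀ x : S, x ≤ cl x ∧ ρ (cl x) = ρ x ∧ ∀ y : S, x ≤ y → ρ y = ρ x → y ≤ cl x

/-- The bases of a matroid scheme: the maximal independent elements. -/
def Bases {S : Type*} [PartialOrder S] [OrderBot S] (ρ : S → ℕ) : Set S :=
  {x | ρ x = natRank x ∧ ∀ w, ρ w = natRank w → x ≤ w → w = x}

/-- The circuits of a matroid scheme: the minimal dependent elements. -/
def Circuits {S : Type*} [PartialOrder S] [OrderBot S] (ρ : S → ℕ) : Set S :=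
  {x | ρ x < natRank x ∧ ∀ y, ρ y < natRank y → y ≤ x → y = x}

/-- `c` is the complement `x ∖ a` of `a` in the Boolean lattice `S_{≤ x}`. -/
def IsComplementIn {S : Type*} [PartialOrder S] [OrderBot S] (c a x : S) : Prop :=
  c ≤ x ∧ a ≤ x ∧ (∀ l : S, l ≤ c → l ≤ a → l = ⊥) ∧
    (∀ u : S, u ≤ x → c ≤ u → a ≤ u → u = x)

/-- The rank of a matroid scheme: the common value of `ρ` on maximal elements
(equal to the maximum value of `ρ`). -/
noncomputable def schemeRank {S : Type*} [Fintype S] (ρ : S → ℕ) : ℕ :=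
  sSup (Set.range ρ)

/-- The Tutte polynomial of a matroid scheme, as a two-variable integer function. -/
noncomputable def tutte {S : Type*} [PartialOrder S] [OrderBot S] [Fintype S]
    (ρ : S → ℕ) (x y : ℤ) : ℤ :=
  ∑ w : S, (x - 1) ^ (schemeRank ρ - ρ w) * (y - 1) ^ (natRank w - ρ w)

/-- An element of a poset is an order-atom if it covers a global minimum. -/
def OrdAtom {P : Type*} [PartialOrder P] (a : P) : Prop :=
  ∃ b : P, (∀ z : P, b ≤ z) ∧ b ⋖ a

/-- A partial order is a geometric lattice: it is bounded below, every pair has a least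
upper bound and greatest lower bound, it is atomistic, and it is (upper) semimodular. -/
def IsGeomLatOrder (P : Type*) [PartialOrder P] : Prop :=
  (∃ b : P, ∀ x : P, b ≤ x) ∧
  (∀ x y : P, ∃ u : P, IsLUB {x, y} u) ∧
  (∀ x y : P, ∃ l : P, IsGLB {x, y} l) ∧
  (∀ x : P, IsLUB {a : P | OrdAtom a ∧ a ≤ x} x) ∧
  (∀ x y m j : P, IsGLB {x, y} m → IsLUB {x, y} j → m ⋖ x → y ⋖ j)

/-- A geometric poset: a finite bounded-below poset with rank function `rk`
satisfying (G1) and (G2). -/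
def IsGeometricPoset (P : Type*) [PartialOrder P] [OrderBot P] [Fintype P]
    (rk : P → ℕ) : Prop :=
  rk ⊥ = 0 ∧
  (∀ ⦃x y : P⦄, x ≤ y → rk x ≤ rk y) ∧
  (∀ x y : P, x ⋖ y → rk y = rk x + 1) ∧
  (∀ m : P, IsMax m → IsGeomLatOrder (Set.Iic m)) ∧
  (∀ (x : P) (A : Set P), (∀ a ∈ A, IsAtom a) →
    ∀ y ∈ mubSet A, rk x < rk y → rk y = Nat.card A →
      ∃ a ∈ A, ¬ a ≤ x ∧ ∃ w : P, x ≤ w ∧ a ≤ w)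

/-!
(1) ⇒ (3): a maximal element not above `a` would have a proper upper bound in `m ∨ a`, and a
circuit `c ≥ a` lies in `(c ∖ a) ∨ a` while having the rank of the independent `c ∖ a`.
(3) ⇒ (2): if a basis `b` missed `a`, an element of `b ∨ a` below a maximal element would be
dependent, and a circuit in it avoids `a`, hence lies below `b`.
(2) ⇒ (1): by (M4), an element of `z ∨ a` with the rank of `z` is the only element of `z ∨ a`.
Some element of `z ∨ a` lies in a basis containing `z`, so for independent `z` every element of
`z ∨ a` is independent. Taking `z ≤ x` independent of rank `ρ x` gives `ρ u = ρ x + 1` on `x ∨ a`.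
-/

section Atoms

variable {S : Type*} [PartialOrder S] [OrderBot S]

def atomsBelow (x : S) : Set S := {b | IsAtom b ∧ b ≤ x}

theorem natRank_eq_ncard (x : S) : natRank x = (atomsBelow x).ncard := rfl

theorem atomsBelow_mono : Monotone (atomsBelow (S := S)) :=
  fun _ _ h _ hb => ⟨hb.1, hb.2.trans h⟩

theorem atomsBelow_bot : atomsBelow (⊥ : S) = ∅ :=
  Set.eq_empty_of_forall_notMem fun _ hb => hb.1.1 (le_bot_iff.1 hb.2)

theorem natRank_bot : natRank (⊥ : S) = 0 := by
  rw [natRank_eq_ncard, atomsBelow_bot, Set.ncard_empty]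

theorem IsAtom.atomsBelow_eq {a : S} (ha : IsAtom a) : atomsBelow a = {a} := by
  ext b
  refine ⟨fun hb => (ha.le_iff.1 hb.2).resolve_left hb.1.1, ?_⟩
  rintro rfl
  exact ⟨ha, le_rfl⟩

theorem IsAtom.natRank_eq {a : S} (ha : IsAtom a) : natRank a = 1 := by
  rw [natRank_eq_ncard, ha.atomsBelow_eq, Set.ncard_singleton]

end Atoms

theorem IsMax.le_of_mub_nonempty {S : Type*} [PartialOrder S] {m a : S} (hm : IsMax m)
    (h : (mub m a).Nonempty) : a ≤ m :=
  let ⟨_, hu⟩ := h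
  hu.2.1.trans (hm hu.1)

namespace IsSimplicialPoset

variable {S : Type*} [PartialOrder S] [OrderBot S] [Fintype S] {a x y z u : S}

theorem le_of_atomsBelow_subset (hS : IsSimplicialPoset S) (hy : y ≤ x) (hz : z ≤ x)
    (h : atomsBelow y ⊆ atomsBelow z) : y ≤ z := by
  obtain ⟨f⟩ := hS x
  change (⟨y, hy⟩ : Set.Iic x) ≤ ⟨z, hz⟩
  rw [← f.le_iff_le]
  intro e he
  have hat : IsAtom (f.symm {e} : S) :=
    IsAtom.of_isAtom_coe_Iic ((f.symm.isAtom_iff _).2 (Set.isAtom_singleton e))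
  have hle : f.symm {e} ≤ ⟨y, hy⟩ := f.symm_apply_le.2 (Set.singleton_subset_iff.2 he)
  have hle' : f.symm {e} ≤ ⟨z, hz⟩ := (h ⟨hat, hle⟩).2
  exact Set.singleton_subset_iff.1 (f.symm_apply_le.1 hle')

theorem eq_of_le_of_atomsBelow_subset (hS : IsSimplicialPoset S) (h : y ≤ z)
    (h' : atomsBelow z ⊆ atomsBelow y) : y = z :=
  le_antisymm h (hS.le_of_atomsBelow_subset le_rfl h h')

theorem eq_of_le_of_natRank_le (hS : IsSimplicialPoset S) (h : y ≤ z)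
    (h' : natRank z ≤ natRank y) : y = z :=
  hS.eq_of_le_of_atomsBelow_subset h
    (Set.eq_of_subset_of_ncard_le (atomsBelow_mono h) h').symm.subset

/-- The map `y ↦ atomsBelow y` from `Iic x` to subsets of `atomsBelow x` is injective, hence
bijective, as both sides have the same cardinality. -/
theorem exists_le_atomsBelow_eq (hS : IsSimplicialPoset S) {T : Set S}
    (hT : T ⊆ atomsBelow x) : ∃ y ≤ x, atomsBelow y = T := by
  obtain ⟨f⟩ := hS x
  let φ : Set.Iic x → Set {a : S // IsAtom a ∧ a ≤ x} := fun y => {e | e.1 ≤ y}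
  have hφ : Function.Injective φ := by
    have hsub : ∀ y z, φ y ⊆ φ z → atomsBelow (y : S) ⊆ atomsBelow z :=
      fun y z h b hb => ⟨hb.1, h (a := ⟨b, hb.1, hb.2.trans y.2⟩) hb.2⟩
    intro y z hyz
    exact Subtype.ext (le_antisymm (hS.le_of_atomsBelow_subset y.2 z.2 (hsub y z hyz.le))
      (hS.le_of_atomsBelow_subset z.2 y.2 (hsub z y hyz.ge)))
  obtain ⟨y, hy⟩ := hφ.surjective_of_finite f.toEquiv {e | e.1 ∈ T}
  refine ⟨y, y.2, Set.ext fun b => ⟨fun hb => ?_, fun hb => ?_⟩⟩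
  · have : (⟨b, hb.1, hb.2.trans y.2⟩ : {a : S // IsAtom a ∧ a ≤ x}) ∈ φ y := hb.2
    rwa [hy] at this
  · have : (⟨b, hT hb⟩ : {a : S // IsAtom a ∧ a ≤ x}) ∈ φ y := by rw [hy]; exact hb
    exact ⟨(hT hb).1, this⟩

theorem atomsBelow_of_mem_mub (hS : IsSimplicialPoset S) (hu : u ∈ mub y z) :
    atomsBelow u = atomsBelow y ∪ atomsBelow z := by
  obtain ⟨j, hju, hj⟩ := hS.exists_le_atomsBelow_eq
    (Set.union_subset (atomsBelow_mono hu.1) (atomsBelow_mono hu.2.1))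
  have hyj := hS.le_of_atomsBelow_subset hu.1 hju (hj ▸ Set.subset_union_left)
  have hzj := hS.le_of_atomsBelow_subset hu.2.1 hju (hj ▸ Set.subset_union_right)
  rwa [hu.2.2 j hyj hzj hju] at hj

theorem mem_mub_of_atomsBelow_subset (hS : IsSimplicialPoset S) (hy : y ≤ u) (hz : z ≤ u)
    (h : atomsBelow u ⊆ atomsBelow y ∪ atomsBelow z) : u ∈ mub y z :=
  ⟨hy, hz, fun _ hyv hzv hvu => hS.eq_of_le_of_atomsBelow_subset hvu
    (h.trans (Set.union_subset (atomsBelow_mono hyv) (atomsBelow_mono hzv)))⟩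

theorem exists_mem_mub_le (hS : IsSimplicialPoset S) (hy : y ≤ x) (hz : z ≤ x) :
    ∃ u ∈ mub y z, u ≤ x := by
  obtain ⟨u, hux, hu⟩ := hS.exists_le_atomsBelow_eq
    (Set.union_subset (atomsBelow_mono hy) (atomsBelow_mono hz))
  exact ⟨u, hS.mem_mub_of_atomsBelow_subset
    (hS.le_of_atomsBelow_subset hy hux (hu ▸ Set.subset_union_left))
    (hS.le_of_atomsBelow_subset hz hux (hu ▸ Set.subset_union_right)) hu.subset, hux⟩

theorem bot_mem_mlb (hS : IsSimplicialPoset S)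
    (h : Disjoint (atomsBelow y) (atomsBelow z)) : ⊥ ∈ mlb y z :=
  ⟨bot_le, bot_le, fun _ hmy hmz _ => (hS.eq_of_le_of_atomsBelow_subset bot_le fun _ hb =>
    (Set.disjoint_left.1 h (atomsBelow_mono hmy hb) (atomsBelow_mono hmz hb)).elim).symm⟩

theorem atomsBelow_of_mem_mub_atom (hS : IsSimplicialPoset S) (ha : IsAtom a)
    (hu : u ∈ mub x a) : atomsBelow u = insert a (atomsBelow x) := by
  rw [hS.atomsBelow_of_mem_mub hu, ha.atomsBelow_eq, Set.union_singleton]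

theorem natRank_of_mem_mub_atom (hS : IsSimplicialPoset S) (ha : IsAtom a) (hax : ¬ a ≤ x)
    (hu : u ∈ mub x a) : natRank u = natRank x + 1 := by
  rw [natRank_eq_ncard, natRank_eq_ncard, hS.atomsBelow_of_mem_mub_atom ha hu,
    Set.ncard_insert_of_notMem fun h => hax h.2]

theorem le_of_le_of_mem_mub_atom (hS : IsSimplicialPoset S) (ha : IsAtom a)
    (hu : u ∈ mub x a) (hy : y ≤ u) (hay : ¬ a ≤ y) : y ≤ x := by
  refine hS.le_of_atomsBelow_subset hy hu.1 fun b hb => ?_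
  have := hS.atomsBelow_of_mem_mub_atom ha hu ▸ atomsBelow_mono hy hb
  exact this.resolve_left fun hba => hay (hba ▸ hb.2)

end IsSimplicialPoset

section Finite

variable {S : Type*} [PartialOrder S] [Finite S]

theorem exists_isMax_ge (x : S) : ∃ m, IsMax m ∧ x ≤ m := by
  obtain ⟨m, hxm, hm⟩ := Finite.exists_le_maximal (p := fun _ : S => True) (a := x) trivial
  exact ⟨m, maximal_true.1 hm, hxm⟩

variable [OrderBot S] {ρ : S → ℕ}

theorem exists_mem_bases_ge {y : S} (hy : ρ y = natRank y) : ∃ b ∈ Bases ρ, y ≤ b := by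
  obtain ⟨b, hyb, hb⟩ := Finite.exists_le_maximal (p := fun x => ρ x = natRank x) hy
  exact ⟨b, ⟨hb.1, fun w hw hbw => le_antisymm (hb.2 hw hbw) hbw⟩, hyb⟩

theorem exists_mem_circuits_le {x : S} (hx : ρ x < natRank x) : ∃ c ∈ Circuits ρ, c ≤ x := by
  obtain ⟨c, hcx, hc⟩ := (Set.toFinite {v : S | ρ v < natRank v}).exists_le_minimal hx
  exact ⟨c, ⟨hc.1, fun y hy hyc => le_antisymm hyc (hc.2 hy hyc)⟩, hcx⟩

end Finite

namespace IsMatroidScheme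

variable {S : Type*} [PartialOrder S] [OrderBot S] [Fintype S] {ρ : S → ℕ} {a x y z u w : S}

theorem rho_bot (h : IsMatroidScheme ρ) : ρ ⊥ = 0 :=
  Nat.le_zero.1 (natRank_bot (S := S) ▸ h.M1 ⊥)

theorem rho_le_add_one_of_mem_mub_atom (h : IsMatroidScheme ρ) (ha : IsAtom a) (hax : ¬ a ≤ x)
    (hu : u ∈ mub x a) : ρ u ≤ ρ x + 1 := by
  have hmlb : ⊥ ∈ mlb x a := h.simplicial.bot_mem_mlb <| by
    rw [ha.atomsBelow_eq, Set.disjoint_singleton_right]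
    exact fun hax' => hax hax'.2
  have := h.M3 x a u ⊥ hu hmlb
  have := ha.natRank_eq ▸ h.M1 a
  have := h.rho_bot
  omega

theorem indep_of_le (h : IsMatroidScheme ρ) (hz : ρ z = natRank z) (hyz : y ≤ z) :
    ρ y = natRank y := by
  obtain ⟨c, hcz, hc⟩ := h.simplicial.exists_le_atomsBelow_eq
    (Set.sdiff_subset (s := atomsBelow z) (t := atomsBelow y))
  have hz_mub : z ∈ mub y c := h.simplicial.mem_mub_of_atomsBelow_subset hyz hcz <| by
    rw [hc, Set.union_sdiff_self]
    exact Set.subset_union_right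
  have hbot_mlb : ⊥ ∈ mlb y c := h.simplicial.bot_mem_mlb (hc ▸ Set.disjoint_sdiff_right)
  have hcard : natRank c + natRank y = natRank z := by
    rw [natRank_eq_ncard, natRank_eq_ncard, natRank_eq_ncard, hc,
      Set.ncard_sdiff_add_ncard_of_subset (atomsBelow_mono hyz)]
  have := h.M3 y c z ⊥ hz_mub hbot_mlb
  have := h.M1 c
  have := h.M1 y
  have := h.rho_bot
  omega

theorem rho_le_of_isMax (h : IsMatroidScheme ρ) (hm : IsMax x) (w : S) : ρ w ≤ ρ x := by
  by_contra! hlt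
  obtain ⟨b, -, -, hbx, hmub⟩ := h.M5 x w hlt
  exact hbx (hm.le_of_mub_nonempty hmub)

/-- Induction on `w` between `z` and `x`: removing an atom `b` from `w` gives `w₀`, and (M3)
for `w₀` and `z ∨ b`, which meet in `z`, bounds `ρ w`. -/
theorem rho_le_of_forall_mub_atom_le (h : IsMatroidScheme ρ) (hzx : z ≤ x)
    (hz : ∀ b u, IsAtom b → u ∈ mub z b → u ≤ x → ρ u ≤ ρ z) : ρ x ≤ ρ z := by
  suffices ∀ n, ∀ w, natRank w = n → z ≤ w → w ≤ x → ρ w ≤ ρ z from this _ x rfl hzx le_rfl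
  intro n
  induction n using Nat.strong_induction_on with
  | _ n ih =>
  rintro w rfl hzw hwx
  by_cases hsub : atomsBelow w ⊆ atomsBelow z
  · rw [h.simplicial.eq_of_le_of_atomsBelow_subset hzw hsub]
  obtain ⟨b, hbw, hbz⟩ := Set.not_subset.1 hsub
  obtain ⟨w₀, hw₀w, hw₀⟩ := h.simplicial.exists_le_atomsBelow_eq
    (Set.sdiff_subset (s := atomsBelow w) (t := {b}))
  have hbw₀ : ¬ b ≤ w₀ := fun hb => (hw₀ ▸ ⟨hbw.1, hb⟩ : b ∈ atomsBelow w \ {b}).2 rfl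
  have hzw₀ : z ≤ w₀ := h.simplicial.le_of_atomsBelow_subset hzw hw₀w <| by
    rw [hw₀]
    refine fun c hc => ⟨atomsBelow_mono hzw hc, ?_⟩
    rintro rfl
    exact hbz hc
  have hlt : natRank w₀ < natRank w := by
    rw [natRank_eq_ncard, natRank_eq_ncard, hw₀]
    exact Set.ncard_sdiff_singleton_lt_of_mem hbw
  obtain ⟨z', hz', hz'w⟩ := h.simplicial.exists_mem_mub_le hzw hbw.2
  have hw_mub : w ∈ mub w₀ z' := h.simplicial.mem_mub_of_atomsBelow_subset hw₀w hz'w <| by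
    rw [hw₀, h.simplicial.atomsBelow_of_mem_mub_atom hbw.1 hz']
    intro c hc
    by_cases hcb : c = b
    · exact Or.inr (Or.inl hcb)
    · exact Or.inl ⟨hc, hcb⟩
  have hz_mlb : z ∈ mlb w₀ z' := ⟨hzw₀, hz'.1, fun m hmw₀ hmz' hzm => le_antisymm
    (h.simplicial.le_of_le_of_mem_mub_atom hbw.1 hz' hmz' fun hbm => hbw₀ (hbm.trans hmw₀)) hzm⟩
  have := h.M3 w₀ z' w z hw_mub hz_mlb
  have := ih _ hlt w₀ rfl hzw₀ (hw₀w.trans hwx)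
  have := hz b z' hbw.1 hz' (hz'w.trans hwx)
  omega

theorem exists_indep_le_rho_eq (h : IsMatroidScheme ρ) (x : S) :
    ∃ z ≤ x, ρ z = natRank z ∧ ρ z = ρ x := by
  obtain ⟨z, -, ⟨hzx, hz⟩, hmax⟩ := Finite.exists_le_maximal
    (p := fun z => z ≤ x ∧ ρ z = natRank z) (a := ⊥) ⟨bot_le, by rw [h.rho_bot, natRank_bot]⟩
  refine ⟨z, hzx, hz, le_antisymm (h.M2 hzx) (h.rho_le_of_forall_mub_atom_le hzx ?_)⟩
  intro b u hb hu hux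
  by_contra! hlt
  have hbz : ¬ b ≤ z := fun hbz => hlt.ne (congrArg ρ (hu.2.2 z le_rfl hbz hu.1))
  have hu_indep : ρ u = natRank u := by
    have := h.M1 u
    have := h.simplicial.natRank_of_mem_mub_atom hb hbz hu
    omega
  exact hbz (hu.2.1.trans (hmax ⟨hux, hu_indep⟩ hu.1))

/-- `z` is a maximal lower bound of two distinct such `y` and `w`, so (M4) gives them a common
upper bound; but below a common upper bound an element is determined by its atoms. -/
theorem eq_of_mem_mub_atom_of_rho_eq (h : IsMatroidScheme ρ) (ha : IsAtom a)
    (hy : y ∈ mub z a) (hw : w ∈ mub z a) (hρ : ρ y = ρ z) : y = w := by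
  by_contra hne
  have hz_mlb : z ∈ mlb y w := ⟨hy.1, hw.1, fun m hmy hmw hzm => by
    by_cases ham : a ≤ m
    · exact absurd ((hy.2.2 m hzm ham hmy).symm.trans (hw.2.2 m hzm ham hmw)) hne
    · exact le_antisymm (h.simplicial.le_of_le_of_mem_mub_atom ha hy hmy ham) hzm⟩
  obtain ⟨u, hu⟩ := h.M4 y w z hz_mlb hρ
  have hyw : atomsBelow y = atomsBelow w := by
    rw [h.simplicial.atomsBelow_of_mem_mub_atom ha hy,
      h.simplicial.atomsBelow_of_mem_mub_atom ha hw]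
  exact hne (le_antisymm (h.simplicial.le_of_atomsBelow_subset hu.1 hu.2.1 hyw.le)
    (h.simplicial.le_of_atomsBelow_subset hu.2.1 hu.1 hyw.ge))

theorem not_le_of_mem_circuits (h : IsMatroidScheme ρ) (ha : IsAtom a)
    (h1 : ∀ x, ¬ a ≤ x → ∀ u ∈ mub x a, ρ u = ρ x + 1) {c : S} (hc : c ∈ Circuits ρ) :
    ¬ a ≤ c := by
  intro hac
  obtain ⟨d, hdc, hd⟩ := h.simplicial.exists_le_atomsBelow_eq
    (Set.sdiff_subset (s := atomsBelow c) (t := {a}))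
  have had : ¬ a ≤ d := fun had => (hd ▸ ⟨ha, had⟩ : a ∈ atomsBelow c \ {a}).2 rfl
  have hd_indep : ρ d = natRank d := by
    by_contra hne
    exact had (hc.2 d (lt_of_le_of_ne (h.M1 d) hne) hdc ▸ hac)
  have hc_mub : c ∈ mub d a := h.simplicial.mem_mub_of_atomsBelow_subset hdc hac <| by
    rw [hd, ha.atomsBelow_eq, Set.sdiff_union_self]
    exact Set.subset_union_left
  have := h1 d had c hc_mub
  have := h.simplicial.natRank_of_mem_mub_atom ha had hc_mub
  have := hc.1
  omega

theorem le_of_mem_bases (h : IsMatroidScheme ρ) (ha : IsAtom a)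
    (hmax : ∀ m, IsMax m → a ≤ m) (hcirc : ∀ c ∈ Circuits ρ, ¬ a ≤ c) {b : S}
    (hb : b ∈ Bases ρ) : a ≤ b := by
  by_contra hab
  obtain ⟨m, hm, hbm⟩ := exists_isMax_ge b
  obtain ⟨w, hw, -⟩ := h.simplicial.exists_mem_mub_le hbm (hmax m hm)
  have hw_dep : ρ w < natRank w :=
    (h.M1 w).lt_of_ne fun hw_indep => hab (hb.2 w hw_indep hw.1 ▸ hw.2.1)
  obtain ⟨c, hc, hcw⟩ := exists_mem_circuits_le hw_dep
  have hcb := h.simplicial.le_of_le_of_mem_mub_atom ha hw hcw (hcirc c hc)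
  exact hc.1.ne (h.indep_of_le hb.1 hcb)

theorem le_of_isMax_of_forall_bases (h : IsMatroidScheme ρ) (h2 : ∀ b ∈ Bases ρ, a ≤ b)
    (hm : IsMax x) : a ≤ x := by
  obtain ⟨z, hzx, hz, hzρ⟩ := h.exists_indep_le_rho_eq x
  refine (h2 z ⟨hz, fun w hw hzw => ?_⟩).trans hzx
  refine (h.simplicial.eq_of_le_of_natRank_le hzw ?_).symm
  rw [← hz, ← hw, hzρ]
  exact h.rho_le_of_isMax hm w

theorem mub_nonempty_of_forall_bases (h : IsMatroidScheme ρ) (h2 : ∀ b ∈ Bases ρ, a ≤ b)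
    (x : S) : (mub x a).Nonempty := by
  obtain ⟨m, hm, hxm⟩ := exists_isMax_ge x
  obtain ⟨u, hu, -⟩ := h.simplicial.exists_mem_mub_le hxm (h.le_of_isMax_of_forall_bases h2 hm)
  exact ⟨u, hu⟩

theorem indep_of_mem_mub_of_forall_bases (h : IsMatroidScheme ρ) (ha : IsAtom a)
    (h2 : ∀ b ∈ Bases ρ, a ≤ b) (hz : ρ z = natRank z) (haz : ¬ a ≤ z) (hy : y ∈ mub z a) :
    ρ y = natRank y := by
  obtain ⟨b, hb, hzb⟩ := exists_mem_bases_ge hz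
  obtain ⟨w, hw, hwb⟩ := h.simplicial.exists_mem_mub_le hzb (h2 b hb)
  by_contra hne
  have hρ : ρ y = ρ z := by
    have := h.M2 hy.1
    have := h.M1 y
    have := h.simplicial.natRank_of_mem_mub_atom ha haz hy
    omega
  rw [h.eq_of_mem_mub_atom_of_rho_eq ha hy hw hρ] at hne
  exact hne (h.indep_of_le hb.1 hwb)

theorem rho_mub_eq_add_one_of_forall_bases (h : IsMatroidScheme ρ) (ha : IsAtom a)
    (h2 : ∀ b ∈ Bases ρ, a ≤ b) (hax : ¬ a ≤ x) (hu : u ∈ mub x a) : ρ u = ρ x + 1 := by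
  obtain ⟨z, hzx, hz, hzρ⟩ := h.exists_indep_le_rho_eq x
  have haz : ¬ a ≤ z := fun haz => hax (haz.trans hzx)
  obtain ⟨y, hy, hyu⟩ := h.simplicial.exists_mem_mub_le (hzx.trans hu.1) hu.2.1
  have := h.M2 hyu
  have := h.indep_of_mem_mub_of_forall_bases ha h2 hz haz hy
  have := h.simplicial.natRank_of_mem_mub_atom ha haz hy
  have := h.rho_le_add_one_of_mem_mub_atom ha hax hu
  omega

end IsMatroidScheme

/-- Proposition 7.2: characterizations of an isthmus. -/
theorem statement12 {S : Type*} [PartialOrder S] [OrderBot S] [Fintype S]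
    (ρ : S → ℕ) (h : IsMatroidScheme ρ) (a : S) (ha : IsAtom a) :
    ((∀ x : S, ¬ a ≤ x → (mub x a).Nonempty ∧ ∀ u ∈ mub x a, ρ u = ρ x + 1) ↔
      (∀ b ∈ Bases ρ, a ≤ b)) ∧
    ((∀ b ∈ Bases ρ, a ≤ b) ↔
      ((∀ m : S, IsMax m → a ≤ m) ∧ ∀ c ∈ Circuits ρ, ¬ a ≤ c)) := by
  have h13 : (∀ x : S, ¬ a ≤ x → (mub x a).Nonempty ∧ ∀ u ∈ mub x a, ρ u = ρ x + 1) →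
      (∀ m : S, IsMax m → a ≤ m) ∧ ∀ c ∈ Circuits ρ, ¬ a ≤ c := fun h1 =>
    ⟨fun m hm => by_contra fun ham => ham (hm.le_of_mub_nonempty (h1 m ham).1),
      fun _ hc => h.not_le_of_mem_circuits ha (fun x hax => (h1 x hax).2) hc⟩
  have h32 : (∀ m : S, IsMax m → a ≤ m) ∧ (∀ c ∈ Circuits ρ, ¬ a ≤ c) →
      ∀ b ∈ Bases ρ, a ≤ b := fun h3 _ hb => h.le_of_mem_bases ha h3.1 h3.2 hb
  have h21 : (∀ b ∈ Bases ρ, a ≤ b) →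
      ∀ x : S, ¬ a ≤ x → (mub x a).Nonempty ∧ ∀ u ∈ mub x a, ρ u = ρ x + 1 := fun h2 x hax =>
    ⟨h.mub_nonempty_of_forall_bases h2 x, fun _ => h.rho_mub_eq_add_one_of_forall_bases ha h2 hax⟩
  exact ⟨⟨h32 ∘ h13, h21⟩, ⟨h13 ∘ h21, h32⟩⟩
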